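/- Conformal Killing virial theorem in coordinates: let q : ℝ → U ⊆ ℝⁿ solve the Euler–Lagrange equations of L = (1/2)g_{ij}(q)v^i v^j - V(q), and let X be a conformal Killing vector field of g with factor f: X^k ∂_k g_{ij} + g_{ik}∂_j X^k + g_{jk}∂_i X^k = f·g_{ij}. If G(t) = g_{ij}(q(t))X^i(q(t))q'^j(t) is bounded and the relevant time averages exist, then ⟨f(q(t))·T(t) - X^i(q(t)) ∂_i V(q(t))⟩ = 0, where T(t) = (1/2)g_{ij}(q(t))q'^i(t)q'^j(t). -/

import Mathlib

open Filter

lemma clm_apply_eq_sum {n : ℕ} (L : (Fin n → ℝ) →L[ℝ] ℝ) (v : Fin n → ℝ) :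
    L v = ∑ k, v k * L (Pi.single k 1) := by
  conv_lhs => rw [← Finset.univ_sum_single v, map_sum]
  refine Finset.sum_congr rfl fun k _ => ?_
  have h : (Pi.single k (v k) : Fin n → ℝ) = v k • (Pi.single k 1 : Fin n → ℝ) := by
    ext m; by_cases hm : m = k <;> simp [hm, Pi.single_apply]
  rw [h, map_smul, smul_eq_mul]

lemma sum3_cycle {n : ℕ} (F : Fin n → Fin n → Fin n → ℝ) :
    ∑ i, ∑ j, ∑ k, F i j k = ∑ i, ∑ j, ∑ k, F j k i := by
  calc ∑ i, ∑ j, ∑ k, F i j k = ∑ i, ∑ k, ∑ j, F i j k :=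
        Finset.sum_congr rfl fun i _ => Finset.sum_comm
    _ = ∑ k, ∑ i, ∑ j, F i j k := Finset.sum_comm

lemma virial_algebra {n : ℕ} (a : Fin n → Fin n → ℝ) (x v dV : Fin n → ℝ)
    (D : Fin n → Fin n → Fin n → ℝ) (dX : Fin n → Fin n → ℝ) (fv : ℝ)
    (hsym : ∀ i j, a i j = a j i)
    (hconf : ∀ i j, (∑ k, x k * D k i j) + (∑ k, a i k * dX j k)
        + (∑ k, a j k * dX i k) = fv * a i j) :
    ∑ i, ((∑ k, v k * dX k i) * (∑ j, a i j * v j)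
        + x i * ((1/2) * (∑ j, ∑ k, D i j k * v j * v k) - dV i))
      = fv * ((1/2) * ∑ i, ∑ j, a i j * v i * v j) - ∑ i, x i * dV i := by
  set S1 := ∑ i, ∑ j, ∑ k, v i * v j * (x k * D k i j) with hS1
  set S2 := ∑ i, ∑ j, ∑ k, v i * v j * (a i k * dX j k) with hS2
  set S3 := ∑ i, ∑ j, ∑ k, v i * v j * (a j k * dX i k) with hS3
  have hsum : S1 + S2 + S3 = fv * ∑ i, ∑ j, a i j * v i * v j := by
    rw [hS1, hS2, hS3, ← Finset.sum_add_distrib, ← Finset.sum_add_distrib, Finset.mul_sum]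
    refine Finset.sum_congr rfl fun i _ => ?_
    rw [← Finset.sum_add_distrib, ← Finset.sum_add_distrib, Finset.mul_sum]
    refine Finset.sum_congr rfl fun j _ => ?_
    have h := hconf i j
    calc (∑ k, v i * v j * (x k * D k i j)) + (∑ k, v i * v j * (a i k * dX j k))
          + (∑ k, v i * v j * (a j k * dX i k))
        = v i * v j * ((∑ k, x k * D k i j) + (∑ k, a i k * dX j k) + (∑ k, a j k * dX i k)) := by
          simp only [mul_add, Finset.mul_sum]
      _ = v i * v j * (fv * a i j) := by rw [h]
      _ = fv * (a i j * v i * v j) := by ring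
  have hB : ∑ i, x i * ((1/2) * (∑ j, ∑ k, D i j k * v j * v k)) = (1/2) * S1 := by
    rw [hS1, sum3_cycle (fun i j k => v i * v j * (x k * D k i j))]
    rw [Finset.mul_sum]
    refine Finset.sum_congr rfl fun i _ => ?_
    simp only [Finset.mul_sum]
    refine Finset.sum_congr rfl fun j _ => ?_
    refine Finset.sum_congr rfl fun k _ => by ring
  have h23 : S2 = S3 := by
    rw [hS2, hS3, Finset.sum_comm]
    refine Finset.sum_congr rfl fun i _ => Finset.sum_congr rfl fun j _ =>
      Finset.sum_congr rfl fun k _ => by ring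
  have hcross : ∑ i, (∑ k, v k * dX k i) * (∑ j, a i j * v j) = S2 := by
    have step1 : ∀ i, (∑ k, v k * dX k i) * (∑ j, a i j * v j)
        = ∑ k, ∑ j, v j * v k * (a j i * dX k i) := by
      intro i; rw [Finset.sum_mul]; refine Finset.sum_congr rfl fun k _ => ?_
      rw [Finset.mul_sum]; refine Finset.sum_congr rfl fun j _ => ?_
      rw [hsym i j]; ring
    calc ∑ i, (∑ k, v k * dX k i) * (∑ j, a i j * v j)
        = ∑ i, ∑ k, ∑ j, v j * v k * (a j i * dX k i) :=
          Finset.sum_congr rfl fun i _ => step1 i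
      _ = ∑ i, ∑ j, ∑ k, v j * v k * (a j i * dX k i) :=
          Finset.sum_congr rfl fun i _ => Finset.sum_comm
      _ = ∑ i, ∑ j, ∑ k, v i * v j * (a i k * dX j k) :=
          (sum3_cycle fun i j k => v i * v j * (a i k * dX j k)).symm
  have expand : ∑ i, ((∑ k, v k * dX k i) * (∑ j, a i j * v j)
        + x i * ((1/2) * (∑ j, ∑ k, D i j k * v j * v k) - dV i))
      = (∑ i, (∑ k, v k * dX k i) * (∑ j, a i j * v j))
        + (∑ i, x i * ((1/2) * (∑ j, ∑ k, D i j k * v j * v k))) - ∑ i, x i * dV i := by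
    rw [← Finset.sum_add_distrib, ← Finset.sum_sub_distrib]
    exact Finset.sum_congr rfl fun i _ => by ring
  rw [expand, hcross, hB]
  have h4 : S2 + (1/2) * S1 = (1/2) * (S1 + S2 + S3) := by rw [← h23]; ring
  rw [h4, hsum]; ring


/-- conformal Killing virial theorem in coordinates. Along a
solution of the Euler–Lagrange equations of `L = ½ g_{ij} v^i v^j - V`, with
`X` a conformal Killing field of `g` with factor `f` and `G = g_{ij} X^i q'^j`
bounded, `⟨f(q)·T - X^i ∂_i V(q)⟩ = 0` where `T = ½ g_{ij} q'^i q'^j`. -/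
theorem conformal_killing_virial_coords {n : ℕ} (U : Set (Fin n → ℝ)) (hU : IsOpen U)
    (g : (Fin n → ℝ) → Fin n → Fin n → ℝ)
    (V f : (Fin n → ℝ) → ℝ) (X : (Fin n → ℝ) → Fin n → ℝ)
    (q : ℝ → Fin n → ℝ)
    (hg : ∀ i j, ContDiffOn ℝ (⊤ : ℕ∞) (fun p => g p i j) U)
    (hgsym : ∀ p ∈ U, ∀ i j, g p i j = g p j i)
    (hgpos : ∀ p ∈ U, ∀ v : Fin n → ℝ, v ≠ 0 → 0 < ∑ i, ∑ j, g p i j * v i * v j)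
    (hV : ContDiffOn ℝ (⊤ : ℕ∞) V U) (hf : ContDiffOn ℝ (⊤ : ℕ∞) f U)
    (hX : ∀ k, ContDiffOn ℝ (⊤ : ℕ∞) (fun p => X p k) U)
    (hq : ∀ i, ContDiff ℝ 2 (fun t => q t i))
    (hrange : ∀ t : ℝ, q t ∈ U)
    -- conformal Killing equations:
    -- `X^k ∂_k g_{ij} + g_{ik} ∂_j X^k + g_{jk} ∂_i X^k = f·g_{ij}`
    (hconf : ∀ p ∈ U, ∀ i j : Fin n,
      (∑ k, X p k * fderiv ℝ (fun p' => g p' i j) p (Pi.single k 1))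
        + (∑ k, g p i k * fderiv ℝ (fun p' => X p' k) p (Pi.single j 1))
        + (∑ k, g p j k * fderiv ℝ (fun p' => X p' k) p (Pi.single i 1))
      = f p * g p i j)
    -- Euler–Lagrange equations
    (hEL : ∀ (t : ℝ) (i : Fin n),
      deriv (fun s => ∑ j, g (q s) i j * deriv (fun u => q u j) s) t =
        (1 / 2) * (∑ j, ∑ k, fderiv ℝ (fun p => g p j k) (q t) (Pi.single i 1)
            * deriv (fun u => q u j) t * deriv (fun u => q u k) t)
          - fderiv ℝ V (q t) (Pi.single i 1))
    (M : ℝ)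
    (hG : ∀ t : ℝ, 0 ≤ t →
      |∑ i, ∑ j, g (q t) i j * X (q t) i * deriv (fun u => q u j) t| ≤ M)
    (A : ℝ)
    (hA : Tendsto (fun τ : ℝ => (1 / τ) * ∫ t in (0:ℝ)..τ,
        f (q t) * ((1 / 2) * ∑ i, ∑ j, g (q t) i j
            * deriv (fun u => q u i) t * deriv (fun u => q u j) t)
          - ∑ i, X (q t) i * fderiv ℝ V (q t) (Pi.single i 1)) atTop (nhds A)) :
    A = 0 := by
  classical
  have hqc : Continuous q := continuous_pi fun i => (hq i).continuous
  have hmem : ∀ t, U ∈ nhds (q t) := fun t => hU.mem_nhds (hrange t)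
  -- derivative of q as a curve
  have hqd : ∀ t : ℝ, HasDerivAt q (fun i => deriv (fun u => q u i) t) t := by
    intro t
    exact hasDerivAt_pi.mpr fun i => ((hq i).differentiable (by norm_num) t).hasDerivAt
  -- derivative of scalar functions composed with q
  have comp : ∀ (φ : (Fin n → ℝ) → ℝ), ContDiffOn ℝ (⊤ : ℕ∞) φ U → ∀ t : ℝ,
      HasDerivAt (fun s => φ (q s))
        (∑ k, deriv (fun u => q u k) t * fderiv ℝ φ (q t) (Pi.single k 1)) t := by
    intro φ hφ t
    have hd : DifferentiableAt ℝ φ (q t) :=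
      (hφ.differentiableOn (by simp)).differentiableAt (hmem t)
    have h1 := hd.hasFDerivAt.comp_hasDerivAt t (hqd t)
    rwa [clm_apply_eq_sum] at h1
  have compD : ∀ (φ : (Fin n → ℝ) → ℝ), ContDiffOn ℝ (⊤ : ℕ∞) φ U → ∀ t : ℝ,
      DifferentiableAt ℝ (fun s => φ (q s)) t :=
    fun φ hφ t => (comp φ hφ t).differentiableAt
  have compC : ∀ (φ : (Fin n → ℝ) → ℝ), ContDiffOn ℝ (⊤ : ℕ∞) φ U →
      Continuous fun t => φ (q t) :=
    fun φ hφ => hφ.continuousOn.comp_continuous hqc hrange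
  -- continuity / differentiability of velocities
  have hvC : ∀ i, Continuous fun t => deriv (fun u => q u i) t :=
    fun i => (hq i).continuous_deriv (by norm_num)
  have hvD : ∀ i (t : ℝ), DifferentiableAt ℝ (fun s => deriv (fun u => q u i) s) t := by
    intro i t
    have h2 : ContDiff ℝ ((1:ℕ∞) + 1) (fun u => q u i) := by convert hq i using 2; norm_num
    exact ((contDiff_succ_iff_deriv.mp h2).2.2.differentiable (by simp)) t
  have hdVC : ∀ i, Continuous fun t => fderiv ℝ V (q t) (Pi.single i 1) := by
    intro i
    have h1 : ContinuousOn (fderiv ℝ V) U := hV.continuousOn_fderiv_of_isOpen hU (by norm_num)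
    exact (h1.comp_continuous hqc hrange).clm_apply continuous_const
  -- G and its derivative
  set G : ℝ → ℝ := fun t => ∑ i, X (q t) i * (∑ j, g (q t) i j * deriv (fun u => q u j) t)
    with hGdef
  set F : ℝ → ℝ := fun t =>
    f (q t) * ((1 / 2) * ∑ i, ∑ j, g (q t) i j
        * deriv (fun u => q u i) t * deriv (fun u => q u j) t)
      - ∑ i, X (q t) i * fderiv ℝ V (q t) (Pi.single i 1) with hFdef
  -- derivative of the momentum p_i
  have hP : ∀ (i : Fin n) (t : ℝ),
      HasDerivAt (fun s => ∑ j, g (q s) i j * deriv (fun u => q u j) s)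
        ((1 / 2) * (∑ j, ∑ k, fderiv ℝ (fun p => g p j k) (q t) (Pi.single i 1)
            * deriv (fun u => q u j) t * deriv (fun u => q u k) t)
          - fderiv ℝ V (q t) (Pi.single i 1)) t := by
    intro i t
    have hdiff : DifferentiableAt ℝ (fun s => ∑ j, g (q s) i j * deriv (fun u => q u j) s) t := by
      apply DifferentiableAt.fun_sum
      intro j _
      exact (compD _ (hg i j) t).mul (hvD j t)
    have h1 := hdiff.hasDerivAt
    rwa [hEL t i] at h1
  have hGF : ∀ t : ℝ, HasDerivAt G (F t) t := by
    intro t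
    have h1 : HasDerivAt G (∑ i,
        ((∑ k, deriv (fun u => q u k) t * fderiv ℝ (fun p => X p i) (q t) (Pi.single k 1))
            * (∑ j, g (q t) i j * deriv (fun u => q u j) t)
          + X (q t) i * ((1 / 2) * (∑ j, ∑ k, fderiv ℝ (fun p => g p j k) (q t) (Pi.single i 1)
              * deriv (fun u => q u j) t * deriv (fun u => q u k) t)
            - fderiv ℝ V (q t) (Pi.single i 1)))) t := by
      rw [hGdef]
      apply HasDerivAt.fun_sum
      intro i _
      exact (comp (fun p => X p i) (hX i) t).mul (hP i t)
    have halg := virial_algebra (fun i j => g (q t) i j) (fun i => X (q t) i)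
      (fun i => deriv (fun u => q u i) t) (fun i => fderiv ℝ V (q t) (Pi.single i 1))
      (fun i j k => fderiv ℝ (fun p => g p j k) (q t) (Pi.single i 1))
      (fun i k => fderiv ℝ (fun p => X p k) (q t) (Pi.single i 1))
      (f (q t)) (fun i j => hgsym _ (hrange t) i j) (fun i j => hconf _ (hrange t) i j)
    rw [halg] at h1
    exact h1
  -- continuity of F
  have hFc : Continuous F := by
    rw [hFdef]
    have h1 : Continuous fun t => ∑ i, ∑ j, g (q t) i j
        * deriv (fun u => q u i) t * deriv (fun u => q u j) t :=
      continuous_finset_sum _ fun i _ => continuous_finset_sum _ fun j _ =>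
        ((compC _ (hg i j)).mul (hvC i)).mul (hvC j)
    have h2 : Continuous fun t => ∑ i, X (q t) i * fderiv ℝ V (q t) (Pi.single i 1) :=
      continuous_finset_sum _ fun i _ => (compC _ (hX i)).mul (hdVC i)
    exact ((compC f hf).mul (continuous_const.mul h1)).sub h2
  -- FTC
  have hFTC : ∀ τ : ℝ, (∫ t in (0:ℝ)..τ, F t) = G τ - G 0 := fun τ =>
    intervalIntegral.integral_eq_sub_of_hasDerivAt (fun t _ => hGF t)
      (hFc.intervalIntegrable _ _)
  -- G matches the bounded expression
  have hGeq : ∀ t : ℝ,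
      (∑ i, ∑ j, g (q t) i j * X (q t) i * deriv (fun u => q u j) t) = G t := by
    intro t
    rw [hGdef]
    refine Finset.sum_congr rfl fun i _ => ?_
    rw [Finset.mul_sum]
    exact Finset.sum_congr rfl fun j _ => by ring
  have hGbound : ∀ t : ℝ, 0 ≤ t → |G t| ≤ M := by
    intro t ht
    rw [← hGeq t]; exact hG t ht
  -- the limit of (1/τ)(G τ - G 0) is 0
  have h0 : Tendsto (fun τ : ℝ => (1 / τ) * (G τ - G 0)) atTop (nhds 0) := by
    apply squeeze_zero_norm' (a := fun τ : ℝ => (2 * M) / τ)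
    · filter_upwards [eventually_ge_atTop (1:ℝ)] with τ hτ
      have hτ0 : 0 < τ := lt_of_lt_of_le one_pos hτ
      have hb : |G τ - G 0| ≤ 2 * M := by
        calc |G τ - G 0| ≤ |G τ| + |G 0| := abs_sub _ _
          _ ≤ M + M := add_le_add (hGbound τ (le_of_lt hτ0)) (hGbound 0 le_rfl)
          _ = 2 * M := by ring
      calc ‖(1 / τ) * (G τ - G 0)‖ = |G τ - G 0| / τ := by
            rw [Real.norm_eq_abs, abs_mul, abs_of_pos (by positivity : (0:ℝ) < 1/τ)]
            ring
        _ ≤ (2 * M) / τ := (div_le_div_iff_of_pos_right hτ0).mpr hb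
    · have : Tendsto (fun τ : ℝ => (2 * M) * τ⁻¹) atTop (nhds ((2 * M) * 0)) :=
        tendsto_inv_atTop_zero.const_mul _
      simpa [div_eq_mul_inv] using this
  -- conclude
  have hA' : Tendsto (fun τ : ℝ => (1 / τ) * (G τ - G 0)) atTop (nhds A) := by
    apply hA.congr
    intro τ
    rw [← hFTC τ]
  exact tendsto_nhds_unique hA' h0
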